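/- arXiv:2303.14932 — 3 statements merged into one kernel-verified Lean document; each statement's English description precedes it below -/
import Mathlib

section
/- Let X be a compact topological space, Y any set, and f : X × Y → ℝ ∪ {∞} such that f(·, y) is lower semi-continuous for every y ∈ Y. Then there exists x⋆ ∈ X such that sup_{y∈Y} f(x⋆, y) = inf_{x∈X} sup_{y∈Y} f(x, y), and moreover sup over finite subsets J ⊆ Y of inf_{x∈X} max_{y∈J} f(x,y) equals inf_{x∈X} sup_{y∈Y} f(x,y). -/
open Set

lemma lsc_exists_min {X : Type*} [TopologicalSpace X] [CompactSpace X] [Nonempty X]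
    {g : X → EReal} (hg : LowerSemicontinuous g) : ∃ x : X, ∀ x', g x ≤ g x' := by
  have hne : ∀ x : X, ({z | g z ≤ g x} : Set X).Nonempty := fun x => ⟨x, show g x ≤ g x from le_rfl⟩
  have hcl : ∀ x : X, IsClosed ({z | g z ≤ g x} : Set X) := fun x =>
    hg.isClosed_preimage (g x)
  have hdir : Directed (· ⊇ ·) (fun x : X => ({z | g z ≤ g x} : Set X)) := by
    intro x x'
    rcases le_total (g x) (g x') with h | h
    · exact ⟨x, fun z hz => hz, fun z (hz : g z ≤ g x) => le_trans hz h⟩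
    · exact ⟨x', fun z (hz : g z ≤ g x') => le_trans hz h, fun z hz => hz⟩
  obtain ⟨z, hz⟩ := IsCompact.nonempty_iInter_of_directed_nonempty_isCompact_isClosed
    _ hdir hne (fun x => (hcl x).isCompact) hcl
  exact ⟨z, fun x' => mem_iInter.1 hz x'⟩

/-- Let `X` be a nonempty compact topological space, `Y` any set, and
`f : X × Y → ℝ ∪ {∞}` with `f(·,y)` lower semi-continuous for each `y`. Then the
infimum defining `v♯ = inf_x sup_y f(x,y)` is attained at some `x⋆`, and
`v♮ = sup over finite J ⊆ Y of inf_x max_{y ∈ J} f(x,y)` equals `v♯`. -/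
theorem stmt_10 {X Y : Type*} [TopologicalSpace X] [CompactSpace X] [Nonempty X]
    (f : X → Y → EReal) (h : ∀ y, LowerSemicontinuous fun x => f x y) :
    (∃ xstar : X, (⨆ y, f xstar y) = ⨅ x : X, ⨆ y, f x y) ∧
    (⨆ J : Finset Y, ⨅ x : X, ⨆ y ∈ J, f x y) = ⨅ x : X, ⨆ y, f x y := by
  classical
  set v : EReal := ⨆ J : Finset Y, ⨅ x : X, ⨆ y ∈ J, f x y with hv
  -- each sublevel family member is nonempty, closed, directed
  have hlsc : ∀ J : Finset Y, LowerSemicontinuous (fun x => ⨆ y ∈ J, f x y) := by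
    intro J
    exact lowerSemicontinuous_iSup fun y => lowerSemicontinuous_iSup fun _ => h y
  set C : Finset Y → Set X := fun J => {x | ⨆ y ∈ J, f x y ≤ v} with hC
  have hcl : ∀ J, IsClosed (C J) := fun J => (hlsc J).isClosed_preimage v
  have hne : ∀ J, (C J).Nonempty := by
    intro J
    obtain ⟨x0, hx0⟩ := lsc_exists_min (hlsc J)
    refine ⟨x0, ?_⟩
    have h1 : (⨆ y ∈ J, f x0 y) ≤ ⨅ x : X, ⨆ y ∈ J, f x y := le_iInf hx0
    exact h1.trans (le_iSup (fun J : Finset Y => ⨅ x : X, ⨆ y ∈ J, f x y) J)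
  have hdir : Directed (· ⊇ ·) C := by
    intro J J'
    refine ⟨J ∪ J', fun z hz => le_trans ?_ (show (⨆ y ∈ J ∪ J', f z y) ≤ v from hz),
      fun z hz => le_trans ?_ (show (⨆ y ∈ J ∪ J', f z y) ≤ v from hz)⟩ <;>
    · refine iSup_le fun y => iSup_le fun hy => ?_
      exact le_iSup_of_le y (le_iSup_of_le (by simp [hy]) le_rfl)
  obtain ⟨z, hz⟩ := IsCompact.nonempty_iInter_of_directed_nonempty_isCompact_isClosed
    _ hdir hne (fun J => (hcl J).isCompact) hcl
  have hzall : ∀ y : Y, f z y ≤ v := by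
    intro y
    have := mem_iInter.1 hz {y}
    simpa [hC] using this
  have h1 : (⨆ y, f z y) ≤ v := iSup_le hzall
  have h2 : v ≤ ⨅ x : X, ⨆ y, f x y := by
    refine iSup_le fun J => le_iInf fun x => ?_
    refine le_trans (iInf_le _ x) ?_
    exact iSup_le fun y => iSup_le fun _ => le_iSup _ y
  have h3 : (⨅ x : X, ⨆ y, f x y) ≤ ⨆ y, f z y := iInf_le _ z
  have heq : (⨆ y, f z y) = ⨅ x : X, ⨆ y, f x y :=
    le_antisymm (h1.trans h2) h3
  exact ⟨⟨z, heq⟩, le_antisymm h2 (h3.trans h1)⟩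
end

section
/- Minimax theorem with positive infinity: let X be a convex compact topological space and Y a convex set, and let f : X × Y → ℝ ∪ {∞} satisfy (i) f(·,y) is convex and lower semi-continuous for each y, (ii) f(x,·) is concave for each x, (iii) if f(x,y) = ∞ for some y then f(x,y') = ∞ for all y' ∈ Y. Then there exists x⋆ ∈ X with sup_{y∈Y} f(x⋆, y) = inf_{x∈X} sup_{y∈Y} f(x,y) = sup_{y∈Y} inf_{x∈X} f(x,y). -/
open Filter Set



lemma ereal_mul_lt_coe {a r : ℝ} (ha : 0 < a) {p : EReal} (h : p < (r : EReal)) :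
    (a : EReal) * p < ((a * r : ℝ) : EReal) := by
  induction p with
  | bot => rw [EReal.coe_mul_bot_of_pos ha]; exact bot_lt_iff_ne_bot.mpr (EReal.coe_ne_bot _)
  | coe p =>
      rw [← EReal.coe_mul, EReal.coe_lt_coe_iff]
      exact (mul_lt_mul_iff_right₀ ha).mpr (EReal.coe_lt_coe_iff.mp h)
  | top => exact absurd h (not_lt.mpr le_top)

lemma key_sep {E F : Type*} [AddCommGroup E] [Module ℝ E]
    [AddCommGroup F] [Module ℝ F]
    {s : Set E} (hsconv : Convex ℝ s) (hsne : s.Nonempty)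
    {t : Set F} (htconv : Convex ℝ t)
    {f : E → F → EReal}
    (hconvx : ∀ y ∈ t, ∀ x₁ ∈ s, ∀ x₂ ∈ s, ∀ a b : ℝ, 0 ≤ a → 0 ≤ b → a + b = 1 →
      f (a • x₁ + b • x₂) y ≤ (a : EReal) * f x₁ y + (b : EReal) * f x₂ y)
    (hinf : ∀ x ∈ s, ∀ y ∈ t, f x y = ⊤ → ∀ y' ∈ t, f x y' = ⊤)
    {ι : Type*} [Fintype ι] (c : ℝ) (yv : ι → F) (hy : ∀ i, yv i ∈ t)
    (hcov : ∀ x ∈ s, ∃ i, (c : EReal) < f x (yv i)) :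
    ∃ lam : ι → ℝ, (∀ i, 0 ≤ lam i) ∧ (∑ i, lam i) = 1 ∧
      ∀ x ∈ s, (∀ i, f x (yv i) ≠ ⊤) →
        ∃ rr : ι → ℝ, c ≤ (∑ i, lam i * rr i) ∧
          (∀ i, lam i ≠ 0 → (rr i : EReal) ≤ f x (yv i)) := by
  classical
  obtain ⟨x0, hx0⟩ := hsne
  obtain ⟨i0, _⟩ := hcov x0 hx0
  haveI : Nonempty ι := ⟨i0⟩
  by_cases htop : ∀ x ∈ s, ∃ i, f x (yv i) = ⊤
  · refine ⟨fun i => if i = i0 then 1 else 0, fun i => by positivity, by simp, ?_⟩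
    intro x hx hxt
    obtain ⟨i, hi⟩ := htop x hx
    exact absurd hi (hxt i)
  push_neg at htop
  obtain ⟨xh, hxh, hxht⟩ := htop
  set A : Set (ι → ℝ) := {u | ∃ x ∈ s, ∀ i, f x (yv i) < (u i : EReal)} with hAdef
  set Q : Set (ι → ℝ) := {u | ∀ i, u i ≤ c} with hQdef
  have hAopen : IsOpen A := by
    have hA2 : A = ⋃ x ∈ s, ⋂ i, {u : ι → ℝ | f x (yv i) < (u i : EReal)} := by
      ext u
      simp only [hAdef, mem_setOf_eq, mem_iUnion, mem_iInter, exists_prop]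
    rw [hA2]
    refine isOpen_biUnion fun x _ => isOpen_iInter_of_finite fun i => ?_
    have h3 : {u : ι → ℝ | f x (yv i) < (u i : EReal)}
        = (fun u : ι → ℝ => ((u i : ℝ) : EReal)) ⁻¹' (Set.Ioi (f x (yv i))) := rfl
    rw [h3]
    exact (continuous_coe_real_ereal.comp (continuous_apply i)).isOpen_preimage _ isOpen_Ioi
  have hAconv : Convex ℝ A := by
    rintro u ⟨x, hx, hfu⟩ u' ⟨x', hx', hfu'⟩ a b ha hb hab
    rcases eq_or_lt_of_le ha with ha0 | hapos
    · have hb1 : b = 1 := by linarith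
      refine ⟨x', hx', fun i => ?_⟩
      simpa [← ha0, hb1] using hfu' i
    rcases eq_or_lt_of_le hb with hb0 | hbpos
    · have ha1 : a = 1 := by linarith
      refine ⟨x, hx, fun i => ?_⟩
      simpa [← hb0, ha1] using hfu i
    refine ⟨a • x + b • x', hsconv hx hx' ha hb hab, fun i => ?_⟩
    refine lt_of_le_of_lt (hconvx (yv i) (hy i) x hx x' hx' a b ha hb hab) ?_
    have h2 : (a:EReal) * f x (yv i) < ((a * u i : ℝ) : EReal) := ereal_mul_lt_coe hapos (hfu i)
    have h3 : (b:EReal) * f x' (yv i) < ((b * u' i : ℝ) : EReal) := ereal_mul_lt_coe hbpos (hfu' i)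
    have h4 := EReal.add_lt_add h2 h3
    rw [← EReal.coe_add] at h4
    simpa [smul_eq_mul] using h4
  have hQconv : Convex ℝ Q := by
    intro u hu u' hu' a b ha hb hab
    intro i
    have h1 : a * u i ≤ a * c := mul_le_mul_of_nonneg_left (hu i) ha
    have h2 : b * u' i ≤ b * c := mul_le_mul_of_nonneg_left (hu' i) hb
    have h4 : a * c + b * c = c := by rw [← add_mul, hab, one_mul]
    have h3 : a * u i + b * u' i ≤ c := by linarith
    simpa [smul_eq_mul] using h3
  have hdisj : Disjoint A Q := by
    rw [Set.disjoint_left]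
    rintro u ⟨x, hx, hfu⟩ huQ
    obtain ⟨i, hi⟩ := hcov x hx
    have h5 : (c : EReal) < (c : EReal) :=
      lt_of_lt_of_le (lt_trans hi (hfu i)) (by exact_mod_cast huQ i)
    exact lt_irrefl _ h5
  obtain ⟨L, α, hLA, hLQ⟩ := geometric_hahn_banach_open hAconv hAopen hQconv hdisj
  have hcQ : (fun _ => c) ∈ Q := fun i => le_rfl
  set e : ι → (ι → ℝ) := fun i => fun j => if i = j then 1 else 0 with hedef
  have hLrep : ∀ u : ι → ℝ, L u = ∑ i, u i * L (e i) := by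
    intro u
    conv_lhs => rw [pi_eq_sum_univ u, map_sum]
    simp [smul_eq_mul]
    rfl
  set μ : ι → ℝ := fun i => -(L (e i)) with hμdef
  have hLexp : ∀ u : ι → ℝ, L u = -∑ i, μ i * u i := by
    intro u
    rw [hLrep u]
    rw [← Finset.sum_neg_distrib]
    refine Finset.sum_congr rfl fun i _ => ?_
    simp only [hμdef]
    ring
  have hLc : L (fun _ => c) = -(c * ∑ i, μ i) := by
    rw [hLexp, Finset.mul_sum]
    congr 1
    exact Finset.sum_congr rfl fun i _ => mul_comm _ _
  have hkey : ∀ u ∈ A, c * (∑ i, μ i) < ∑ i, μ i * u i := by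
    intro u hu
    have h1 : L u < α := hLA u hu
    have h2 : α ≤ L (fun _ => c) := hLQ _ hcQ
    rw [hLexp u] at h1
    rw [hLc] at h2
    linarith
  have hμnn : ∀ i, 0 ≤ μ i := by
    intro i
    by_contra hneg
    push_neg at hneg
    have hli : 0 < L (e i) := by simp only [hμdef] at hneg; linarith
    have hq : ∀ N : ℝ, 0 ≤ N → ((fun _ => c) - N • e i) ∈ Q := by
      intro N hN j
      simp only [Pi.sub_apply, Pi.smul_apply, smul_eq_mul, hedef]
      by_cases h : i = j <;> simp [h] <;> linarith
    have hval : ∀ N : ℝ, L ((fun _ => c) - N • e i) = L (fun _ => c) - N * L (e i) := by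
      intro N
      rw [map_sub, map_smul, smul_eq_mul]
    have hαc : α ≤ L (fun _ => c) := hLQ _ hcQ
    obtain ⟨N, hNdef⟩ : ∃ N : ℝ, N = (L (fun _ => c) - α) / L (e i) + 1 := ⟨_, rfl⟩
    have hN0 : 0 ≤ N := by
      have hd0 : 0 ≤ (L (fun _ => c) - α) / L (e i) := div_nonneg (by linarith) hli.le
      rw [hNdef]; linarith
    have h6 := hLQ _ (hq N hN0)
    rw [hval N] at h6
    have h7 : N * L (e i) = (L (fun _ => c) - α) + L (e i) := by
      rw [hNdef]; field_simp
    linarith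
  have huA0 : (fun i => (f xh (yv i)).toReal + 1) ∈ A := by
    refine ⟨xh, hxh, fun i => ?_⟩
    refine lt_of_le_of_lt (EReal.le_coe_toReal (hxht i)) ?_
    exact_mod_cast lt_add_one _
  have hS : 0 < ∑ i, μ i := by
    have hnn : 0 ≤ ∑ i, μ i := Finset.sum_nonneg fun i _ => hμnn i
    rcases hnn.lt_or_eq with h | h
    · exact h
    · exfalso
      have hall : ∀ i, μ i = 0 := fun i =>
        (Finset.sum_eq_zero_iff_of_nonneg (fun j _ => hμnn j)).mp h.symm i (Finset.mem_univ i)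
      have hL0 : ∀ u, L u = 0 := by
        intro u
        rw [hLexp u]
        rw [Finset.sum_eq_zero fun i _ => by rw [hall i, zero_mul]]
        simp
      have h1 := hLA _ huA0
      have h2 := hLQ _ hcQ
      rw [hL0] at h1 h2
      linarith
  refine ⟨fun i => μ i / (∑ j, μ j), fun i => div_nonneg (hμnn i) hS.le,
    by beta_reduce; rw [← Finset.sum_div, div_self hS.ne'], ?_⟩
  intro x hx hxtop
  beta_reduce
  set rr : ι → ℝ := fun i => (f x (yv i)).toReal with hrrdef
  have hmemA : ∀ ε : ℝ, 0 < ε → (fun i => rr i + ε) ∈ A := by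
    intro ε hε
    refine ⟨x, hx, fun i => ?_⟩
    rcases eq_or_ne (f x (yv i)) ⊥ with hb | hb
    · rw [hb]; exact bot_lt_iff_ne_bot.mpr (EReal.coe_ne_bot _)
    · have h8 : f x (yv i) = ((rr i : ℝ) : EReal) := (EReal.coe_toReal (hxtop i) hb).symm
      rw [h8]
      exact_mod_cast lt_add_of_pos_right _ hε
  have hbot : ∀ i, μ i ≠ 0 → f x (yv i) ≠ ⊥ := by
    intro i hμi hfb
    have hμpos : 0 < μ i := lt_of_le_of_ne (hμnn i) (Ne.symm hμi)
    have hmem : ∀ N : ℝ, (fun j => if j = i then -N else rr j + 1) ∈ A := by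
      intro N
      refine ⟨x, hx, fun j => ?_⟩
      by_cases hji : j = i
      · subst hji
        simp only [if_pos rfl, hfb]
        exact bot_lt_iff_ne_bot.mpr (EReal.coe_ne_bot _)
      · simp only [if_neg hji]
        rcases eq_or_ne (f x (yv j)) ⊥ with hb | hb
        · rw [hb]; exact bot_lt_iff_ne_bot.mpr (EReal.coe_ne_bot _)
        · rw [← EReal.coe_toReal (hxtop j) hb]
          exact_mod_cast lt_add_one _
    have hval : ∀ N : ℝ, (∑ j, μ j * (if j = i then -N else rr j + 1))
        = (∑ j, μ j * (rr j + 1)) + μ i * (-N - (rr i + 1)) := by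
      intro N
      have hsplit : ∀ j, μ j * (if j = i then -N else rr j + 1)
          = μ j * (rr j + 1) + (if j = i then μ j * (-N - (rr j + 1)) else 0) := by
        intro j
        by_cases hji : j = i <;> simp [hji] <;> ring
      rw [Finset.sum_congr rfl fun j _ => hsplit j, Finset.sum_add_distrib,
        Finset.sum_ite_eq' Finset.univ i (fun j => μ j * (-N - (rr j + 1)))]
      simp
    obtain ⟨N, hNd⟩ : ∃ N : ℝ,
        N = ((∑ j, μ j * (rr j + 1)) - c * (∑ j, μ j)) / μ i - (rr i + 1) := ⟨_, rfl⟩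
    have h1 := hkey _ (hmem N)
    rw [hval N] at h1
    have h2 : μ i * (-N - (rr i + 1)) = -((∑ j, μ j * (rr j + 1)) - c * (∑ j, μ j)) := by
      rw [hNd]
      field_simp
      ring
    linarith
  have hsum_ge : c * (∑ i, μ i) ≤ ∑ i, μ i * rr i := by
    have hlt : ∀ ε : ℝ, 0 < ε → c * (∑ i, μ i) < (∑ i, μ i * rr i) + ε * (∑ i, μ i) := by
      intro ε hε
      have h1 := hkey _ (hmemA ε hε)
      have h2 : (∑ i, μ i * (rr i + ε)) = (∑ i, μ i * rr i) + ε * (∑ i, μ i) := by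
        rw [Finset.mul_sum, ← Finset.sum_add_distrib]
        exact Finset.sum_congr rfl fun i _ => by ring
      rw [h2] at h1
      exact h1
    by_contra hcon
    push_neg at hcon
    set T := ∑ i, μ i * rr i with hT
    have hd : 0 < (c * (∑ i, μ i) - T) / (2 * (∑ i, μ i)) :=
      div_pos (by linarith) (by linarith)
    have h1 := hlt _ hd
    have h2 : (c * (∑ i, μ i) - T) / (2 * (∑ i, μ i)) * (∑ i, μ i)
        = (c * (∑ i, μ i) - T) / 2 := by
      field_simp
    linarith
  refine ⟨rr, ?_, ?_⟩
  · have h1 : (∑ i, μ i / (∑ j, μ j) * rr i) = (∑ i, μ i * rr i) / (∑ j, μ j) := by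
      rw [eq_div_iff hS.ne', Finset.sum_mul]
      refine Finset.sum_congr rfl fun i _ => ?_
      field_simp
    rw [h1, le_div_iff₀ hS]
    linarith
  · intro i hne
    have hμne : μ i ≠ 0 := fun h => hne (by simp [h])
    rw [EReal.coe_toReal (hxtop i) (hbot i hμne)]

lemma lsc_restrict' {E : Type*} [TopologicalSpace E] {s : Set E} {g : E → EReal}
    (h : LowerSemicontinuousOn g s) : LowerSemicontinuous (fun x : s => g ↑x) := by
  intro x c hc
  have h1 := h ↑x x.2 c hc
  rw [← map_nhds_subtype_val] at h1
  exact eventually_map.mp h1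

lemma lsc_exists_min_s11 {E : Type*} [TopologicalSpace E] {s : Set E} (hs : IsCompact s)
    (hne : s.Nonempty) {g : E → EReal} (hg : LowerSemicontinuousOn g s) :
    ∃ x ∈ s, ∀ x' ∈ s, g x ≤ g x' := by
  by_contra h
  push_neg at h
  haveI : CompactSpace s := isCompact_iff_compactSpace.mp hs
  have hG : LowerSemicontinuous (fun x : s => g ↑x) := lsc_restrict' hg
  have hcov : (Set.univ : Set s) ⊆ ⋃ x' : s, {x : s | g ↑x' < g ↑x} := by
    intro x _
    obtain ⟨x', hx', hlt⟩ := h ↑x x.2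
    simp only [Set.mem_iUnion]
    exact ⟨⟨x', hx'⟩, hlt⟩
  obtain ⟨u, hu⟩ := isCompact_univ.elim_finite_subcover
      (fun x' : s => {x : s | g ↑x' < g ↑x})
      (fun x' => hG.isOpen_preimage (g ↑x')) hcov
  have hune : u.Nonempty := by
    obtain ⟨x0, hx0⟩ := hne
    have := hu (mem_univ (⟨x0, hx0⟩ : s))
    simp only [Set.mem_iUnion] at this
    obtain ⟨i, hi, _⟩ := this
    exact ⟨i, hi⟩
  obtain ⟨b, hb, hbmin⟩ := u.exists_min_image (fun x' => g ↑x') hune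
  have := hu (mem_univ b)
  simp only [Set.mem_iUnion] at this
  obtain ⟨i, hi, hlt⟩ := this
  exact absurd (hbmin i hi) (not_le.mpr hlt)

lemma ereal_coe_mul_le {a : ℝ} (ha : 0 ≤ a) {p q : EReal} (h : p ≤ q) :
    (a : EReal) * p ≤ (a : EReal) * q :=
  mul_le_mul_of_nonneg_left h (by exact_mod_cast ha)

lemma jensen_conc {E F : Type*} [AddCommGroup E] [Module ℝ E]
    [AddCommGroup F] [Module ℝ F]
    {s : Set E} {t : Set F} (htconv : Convex ℝ t) {f : E → F → EReal}
    (hconc : ∀ x ∈ s, ∀ y₁ ∈ t, ∀ y₂ ∈ t, ∀ a b : ℝ, 0 ≤ a → 0 ≤ b → a + b = 1 →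
      (a : EReal) * f x y₁ + (b : EReal) * f x y₂ ≤ f x (a • y₁ + b • y₂))
    {ι : Type*} (K : Finset ι) :
    ∀ (lam : ι → ℝ) (yv : ι → F), (∀ i ∈ K, yv i ∈ t) → (∀ i ∈ K, 0 ≤ lam i) →
      (∑ i ∈ K, lam i) = 1 → ∀ x ∈ s, ∀ r : ι → ℝ,
      (∀ i ∈ K, lam i ≠ 0 → (r i : EReal) ≤ f x (yv i)) →
      ((∑ i ∈ K, lam i * r i : ℝ) : EReal) ≤ f x (∑ i ∈ K, lam i • yv i) := by
  induction K using Finset.cons_induction with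
  | empty => intro lam yv _ _ hsum; simp at hsum
  | cons a K ha IH =>
    intro lam yv hy h0 hsum x hx r hr
    rw [Finset.sum_cons] at hsum
    rw [Finset.sum_cons, Finset.sum_cons]
    have hA0 : 0 ≤ lam a := h0 a (Finset.mem_cons_self a K)
    have hKnn : 0 ≤ ∑ i ∈ K, lam i :=
      Finset.sum_nonneg fun i hi => h0 i (Finset.mem_cons_of_mem hi)
    by_cases hA : lam a = 0
    · have hs0 : (∑ i ∈ K, lam i) = 1 := by rw [hA] at hsum; linarith
      have := IH lam yv (fun i hi => hy i (Finset.mem_cons_of_mem hi))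
        (fun i hi => h0 i (Finset.mem_cons_of_mem hi)) hs0 x hx r
        (fun i hi hne => hr i (Finset.mem_cons_of_mem hi) hne)
      simpa [hA] using this
    by_cases hA1 : lam a = 1
    · have hs0 : (∑ i ∈ K, lam i) = 0 := by rw [hA1] at hsum; linarith
      have hall : ∀ i ∈ K, lam i = 0 := fun i hi =>
        (Finset.sum_eq_zero_iff_of_nonneg
          (fun j hj => h0 j (Finset.mem_cons_of_mem hj))).mp hs0 i hi
      have e1 : (∑ i ∈ K, lam i * r i) = 0 :=
        Finset.sum_eq_zero fun i hi => by rw [hall i hi, zero_mul]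
      have e2 : (∑ i ∈ K, lam i • yv i) = 0 :=
        Finset.sum_eq_zero fun i hi => by rw [hall i hi, zero_smul]
      rw [e1, e2, hA1, add_zero, one_mul, add_zero, one_smul]
      exact hr a (Finset.mem_cons_self a K) (by rw [hA1]; exact one_ne_zero)
    · have hApos : 0 < lam a := lt_of_le_of_ne hA0 (Ne.symm hA)
      have hAlt : lam a < 1 := lt_of_le_of_ne (by linarith) hA1
      set b : ℝ := 1 - lam a with hbdef
      have hb : 0 < b := by simp only [hbdef]; linarith
      have hKb : (∑ i ∈ K, lam i) = b := by simp only [hbdef]; linarith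
      set μ : ι → ℝ := fun i => lam i / b with hμdef
      have hμnn : ∀ i ∈ K, 0 ≤ μ i := fun i hi =>
        div_nonneg (h0 i (Finset.mem_cons_of_mem hi)) hb.le
      have hμs : (∑ i ∈ K, μ i) = 1 := by
        simp only [hμdef]; rw [← Finset.sum_div, hKb, div_self hb.ne']
      have hIH := IH μ yv (fun i hi => hy i (Finset.mem_cons_of_mem hi)) hμnn hμs x hx r
        (fun i hi hne => hr i (Finset.mem_cons_of_mem hi)
          (fun h' => hne (by simp only [hμdef]; rw [h', zero_div])))
      have hybar : (∑ i ∈ K, μ i • yv i) ∈ t :=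
        htconv.sum_mem hμnn hμs (fun i hi => hy i (Finset.mem_cons_of_mem hi))
      have hcc := hconc x hx (yv a) (hy a (Finset.mem_cons_self a K)) _ hybar
        (lam a) b hA0 hb.le (by simp only [hbdef]; ring)
      have e1 : (lam a : EReal) * (r a : EReal) ≤ (lam a : EReal) * f x (yv a) :=
        ereal_coe_mul_le hA0 (hr a (Finset.mem_cons_self a K) hA)
      have e2 : (b : EReal) * ((∑ i ∈ K, μ i * r i : ℝ) : EReal)
          ≤ (b : EReal) * f x (∑ i ∈ K, μ i • yv i) := ereal_coe_mul_le hb.le hIH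
      have esum : (∑ i ∈ K, lam i * r i) = b * ∑ i ∈ K, μ i * r i := by
        rw [Finset.mul_sum]
        refine Finset.sum_congr rfl fun i hi => ?_
        have hbb : b * (lam i / b) = lam i := by field_simp
        simp only [hμdef]
        rw [← mul_assoc, hbb]
      have evec : (∑ i ∈ K, lam i • yv i) = b • ∑ i ∈ K, μ i • yv i := by
        rw [Finset.smul_sum]
        refine Finset.sum_congr rfl fun i hi => ?_
        rw [smul_smul]
        congr 1
        simp only [hμdef]
        field_simp
      calc ((lam a * r a + ∑ i ∈ K, lam i * r i : ℝ) : EReal)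
          = (lam a : EReal) * (r a : EReal)
            + (b : EReal) * ((∑ i ∈ K, μ i * r i : ℝ) : EReal) := by
            rw [esum, EReal.coe_add, EReal.coe_mul, EReal.coe_mul]
        _ ≤ (lam a : EReal) * f x (yv a) + (b : EReal) * f x (∑ i ∈ K, μ i • yv i) :=
            add_le_add e1 e2
        _ ≤ f x (lam a • yv a + b • ∑ i ∈ K, μ i • yv i) := hcc
        _ = f x (lam a • yv a + ∑ i ∈ K, lam i • yv i) := by rw [← evec]

/-- Minimax theorem for functions possibly taking the value `+∞`: if `X` (modeled as a
nonempty convex compact subset `s` of a topological vector space) and `Y` (a convex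
subset `t` of a vector space) are convex, `f(·,y)` is convex and lower semi-continuous
on `s` for each `y ∈ t`, `f(x,·)` is concave on `t` for each `x ∈ s`, and
`f(x,y) = ∞` for some `y ∈ t` implies `f(x,y') = ∞` for all `y' ∈ t`, then there is
`x⋆ ∈ s` with `sup_{y} f(x⋆,y) = inf_x sup_y f(x,y) = sup_y inf_x f(x,y)`. -/
theorem stmt_11 {E F : Type*} [AddCommGroup E] [Module ℝ E] [TopologicalSpace E]
    [AddCommGroup F] [Module ℝ F]
    (s : Set E) (hsconv : Convex ℝ s) (hscomp : IsCompact s) (hsne : s.Nonempty)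
    (t : Set F) (htconv : Convex ℝ t)
    (f : E → F → EReal)
    (hconvx : ∀ y ∈ t, ∀ x₁ ∈ s, ∀ x₂ ∈ s, ∀ a b : ℝ, 0 ≤ a → 0 ≤ b → a + b = 1 →
      f (a • x₁ + b • x₂) y ≤ (a : EReal) * f x₁ y + (b : EReal) * f x₂ y)
    (hlsc : ∀ y ∈ t, LowerSemicontinuousOn (fun x => f x y) s)
    (hconc : ∀ x ∈ s, ∀ y₁ ∈ t, ∀ y₂ ∈ t, ∀ a b : ℝ, 0 ≤ a → 0 ≤ b → a + b = 1 →
      (a : EReal) * f x y₁ + (b : EReal) * f x y₂ ≤ f x (a • y₁ + b • y₂))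
    (hinf : ∀ x ∈ s, ∀ y ∈ t, f x y = ⊤ → ∀ y' ∈ t, f x y' = ⊤) :
    ∃ xstar ∈ s,
      (⨆ y ∈ t, f xstar y) = (⨅ x ∈ s, ⨆ y ∈ t, f x y) ∧
      (⨅ x ∈ s, ⨆ y ∈ t, f x y) = (⨆ y ∈ t, ⨅ x ∈ s, f x y) := by
  classical
  have hlscg : LowerSemicontinuousOn (fun x => ⨆ y ∈ t, f x y) s :=
    lowerSemicontinuousOn_biSup (fun y hy => hlsc y hy)
  obtain ⟨xstar, hxs, hmin⟩ := lsc_exists_min_s11 hscomp hsne hlscg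
  have heq1 : (⨆ y ∈ t, f xstar y) = ⨅ x ∈ s, ⨆ y ∈ t, f x y :=
    le_antisymm (le_iInf₂ fun x hx => hmin x hx) (iInf₂_le xstar hxs)
  refine ⟨xstar, hxs, heq1, le_antisymm ?_ ?_⟩
  · by_contra hcon
    push_neg at hcon
    obtain ⟨c, hc1, hc2⟩ := EReal.lt_iff_exists_real_btwn.mp hcon
    rcases t.eq_empty_or_nonempty with rfl | htne
    · have hb : (⨅ x ∈ s, ⨆ y ∈ (∅ : Set F), f x y) ≤ ⊥ := by
        obtain ⟨x0, hx0⟩ := hsne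
        refine le_trans (iInf₂_le x0 hx0) ?_
        simp
      exact absurd (lt_of_lt_of_le hc2 hb) (by simp)
    · have hxy : ∀ x ∈ s, ∃ y ∈ t, (c : EReal) < f x y := by
        intro x hx
        have h2 := lt_of_lt_of_le hc2 (iInf₂_le x hx)
        simpa [lt_iSup_iff] using h2
      haveI : CompactSpace s := isCompact_iff_compactSpace.mp hscomp
      have hopen : ∀ y : t, IsOpen {x : s | (c : EReal) < f ↑x ↑y} := by
        intro y
        exact (lsc_restrict' (hlsc ↑y y.2)).isOpen_preimage c
      have hcov : (Set.univ : Set s) ⊆ ⋃ y : t, {x : s | (c : EReal) < f ↑x ↑y} := by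
        intro x _
        obtain ⟨y, hyt, hlt⟩ := hxy ↑x x.2
        simp only [Set.mem_iUnion]
        exact ⟨⟨y, hyt⟩, hlt⟩
      obtain ⟨u, hu⟩ := isCompact_univ.elim_finite_subcover _ hopen hcov
      have hcov2 : ∀ x ∈ s, ∃ i : ↥u, (c : EReal) < f x ↑↑i := by
        intro x hx
        have h3 := hu (Set.mem_univ (⟨x, hx⟩ : s))
        simp only [Set.mem_iUnion] at h3
        obtain ⟨y, hyu, hlt⟩ := h3
        exact ⟨⟨y, hyu⟩, hlt⟩
      obtain ⟨lam, hlnn, hlsum, hlam⟩ := key_sep hsconv hsne htconv hconvx hinf c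
        (fun i : ↥u => ↑↑i) (fun i => (↑i : ↥t).2) hcov2
      set y0 : F := ∑ i : ↥u, lam i • (↑↑i : F) with hy0def
      have hy0 : y0 ∈ t :=
        htconv.sum_mem (fun i _ => hlnn i) hlsum (fun i _ => (↑i : ↥t).2)
      have hcy : ∀ x ∈ s, (c : EReal) ≤ f x y0 := by
        intro x hx
        by_cases hxt : ∃ i : ↥u, f x ↑↑i = ⊤
        · obtain ⟨i, hi⟩ := hxt
          rw [hinf x hx _ (↑i : ↥t).2 hi y0 hy0]
          exact le_top
        · push_neg at hxt
          obtain ⟨rr, hcr, hrr⟩ := hlam x hx hxt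
          have hJ := jensen_conc htconv hconc Finset.univ lam (fun i : ↥u => ↑↑i)
            (fun i _ => (↑i : ↥t).2) (fun i _ => hlnn i) hlsum x hx rr
            (fun i _ hne => hrr i hne)
          refine le_trans ?_ hJ
          exact_mod_cast hcr
      have hfin : (c : EReal) ≤ ⨆ y ∈ t, ⨅ x ∈ s, f x y := by
        calc (c : EReal) ≤ ⨅ x ∈ s, f x y0 := le_iInf₂ hcy
          _ ≤ ⨆ y ∈ t, ⨅ x ∈ s, f x y := le_iSup₂ (f := fun y _ => ⨅ x ∈ s, f x y) y0 hy0
      exact absurd hc1 (not_lt.mpr hfin)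
  · refine iSup₂_le fun y hy => le_iInf₂ fun x hx => ?_
    exact le_trans (iInf₂_le x hx) (le_iSup₂_of_le y hy le_rfl)
end

section
/- Let X be a convex compact topological space and f(·, y₁),…,f(·, yₙ) : X → ℝ ∪ {∞} convex lower semi-continuous functions such that f(x, yᵢ) = ∞ for some i implies f(x, yⱼ) = ∞ for all j. If w := sup_{λ∈Δₙ} inf_{x∈X} Σᵢ λᵢ f(x,yᵢ) is finite, then inf_{x∈X} max_{i} f(x, yᵢ) ≤ w. -/
open Filter Topology

private lemma ereal_coe_sum {ι : Type*} (s : Finset ι) (g : ι → ℝ) :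
    ((∑ i ∈ s, g i : ℝ) : EReal) = ∑ i ∈ s, (g i : EReal) := by
  induction s using Finset.cons_induction with
  | empty => simp
  | cons i s hi ih => simp [Finset.sum_cons, EReal.coe_add, ih]

/-- Key finite-dimensional step of the minimax theorem with `+∞`: let `s` be a nonempty
convex compact subset of a topological vector space, and `f 1, …, f n : E → ℝ ∪ {∞}`
convex lower semi-continuous functions on `s` such that `f i x = ∞` for some `i` implies
`f j x = ∞` for all `j`. If `w = sup_{λ ∈ Δₙ} inf_{x ∈ s} Σᵢ λᵢ f i x` is finite, then
`inf_{x ∈ s} maxᵢ f i x ≤ w`. -/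
theorem stmt_12 {E : Type*} [AddCommGroup E] [Module ℝ E] [TopologicalSpace E]
    {n : ℕ} (s : Set E) (hsconv : Convex ℝ s) (hscomp : IsCompact s) (hsne : s.Nonempty)
    (f : Fin n → E → EReal)
    (hconv : ∀ i, ∀ x₁ ∈ s, ∀ x₂ ∈ s, ∀ a b : ℝ, 0 ≤ a → 0 ≤ b → a + b = 1 →
      f i (a • x₁ + b • x₂) ≤ (a : EReal) * f i x₁ + (b : EReal) * f i x₂)
    (hlsc : ∀ i, LowerSemicontinuousOn (f i) s)
    (hinfty : ∀ x ∈ s, (∃ i, f i x = ⊤) → ∀ j, f j x = ⊤)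
    (w : EReal)
    (hw : w = ⨆ lam : {l : Fin n → ℝ // (∀ i, 0 ≤ l i) ∧ ∑ i, l i = 1},
      ⨅ x ∈ s, ∑ i, ((lam : Fin n → ℝ) i : EReal) * f i x)
    (hfin : w ≠ ⊤ ∧ w ≠ ⊥) :
    (⨅ x ∈ s, ⨆ i, f i x) ≤ w := by
  by_contra hcon
  push_neg at hcon
  obtain ⟨c, hwc, hcI⟩ := exists_between hcon
  have hcnetop : c ≠ ⊤ := ne_top_of_lt hcI
  have hcnebot : c ≠ ⊥ := ne_bot_of_gt hwc
  lift c to ℝ using ⟨hcnetop, hcnebot⟩ with cr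
  -- the simplex is nonempty (otherwise w = ⊥)
  have hSne : Nonempty {l : Fin n → ℝ // (∀ i, 0 ≤ l i) ∧ ∑ i, l i = 1} := by
    by_contra hne
    rw [not_nonempty_iff] at hne
    rw [iSup_of_empty] at hw
    exact hfin.2 hw
  have hNE : Nonempty E := ⟨hsne.choose⟩
  classical
  -- the "upper set" in ℝⁿ
  set C : Set (Fin n → ℝ) := {z | ∃ x ∈ s, ∀ i, f i x ≤ (z i : EReal)} with hCdef
  -- C is nonempty (otherwise w = ⊤)
  have hCne : C.Nonempty := by
    by_contra hCe
    rw [Set.not_nonempty_iff_eq_empty] at hCe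
    have htop : ∀ x ∈ s, ∀ j, f j x = ⊤ := by
      intro x hx
      refine hinfty x hx ?_
      by_contra hnot
      push_neg at hnot
      have hmem : (fun i => (f i x).toReal) ∈ C :=
        ⟨x, hx, fun i => EReal.le_coe_toReal (hnot i)⟩
      rw [hCe] at hmem
      exact hmem
    obtain ⟨lam₀⟩ := hSne
    have hex : ∃ i, 0 < (lam₀ : Fin n → ℝ) i := by
      by_contra hno
      push_neg at hno
      have h0 : ∑ i, (lam₀ : Fin n → ℝ) i = 0 :=
        Finset.sum_eq_zero fun i _ => le_antisymm (hno i) (lam₀.2.1 i)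
      rw [lam₀.2.2] at h0
      norm_num at h0
    obtain ⟨i₀, hi₀⟩ := hex
    have hsum_top : ∀ x ∈ s, ∑ i, ((lam₀ : Fin n → ℝ) i : EReal) * f i x = ⊤ := by
      intro x hx
      refine top_le_iff.mp ?_
      have hnn : ∀ i ∈ Finset.univ, (0 : EReal) ≤ ((lam₀ : Fin n → ℝ) i : EReal) * f i x := by
        intro i _
        rw [htop x hx i]
        rcases eq_or_lt_of_le (lam₀.2.1 i) with h | h
        · rw [← h]; simp
        · rw [EReal.mul_top_of_pos (by exact_mod_cast h)]; exact le_top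
      have hstep := Finset.single_le_sum hnn (Finset.mem_univ i₀)
      rw [htop x hx i₀, EReal.mul_top_of_pos (by exact_mod_cast hi₀)] at hstep
      exact hstep
    have h1 : (⨅ x ∈ s, ∑ i, ((lam₀ : Fin n → ℝ) i : EReal) * f i x) ≤ w := by
      rw [hw]
      exact le_iSup (fun lam : {l : Fin n → ℝ // (∀ i, 0 ≤ l i) ∧ ∑ i, l i = 1} =>
        ⨅ x ∈ s, ∑ i, ((lam : Fin n → ℝ) i : EReal) * f i x) lam₀
    have h2 : (⊤ : EReal) ≤ ⨅ x ∈ s, ∑ i, ((lam₀ : Fin n → ℝ) i : EReal) * f i x :=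
      le_iInf₂ fun x hx => (hsum_top x hx).ge
    exact hfin.1 (top_le_iff.mp (h2.trans h1))
  obtain ⟨z₀, hz₀⟩ := hCne
  -- limit points of C still dominated by a point of s (compactness + lsc)
  have hcl : ∀ z : Fin n → ℝ, z ∈ closure C → ∃ x ∈ s, ∀ i, f i x ≤ (z i : EReal) := by
    intro z hz
    have hne : (𝓝[C] z).NeBot := mem_closure_iff_nhdsWithin_neBot.mp hz
    have hwit : ∀ z' : Fin n → ℝ, z' ∈ C → ∃ x, x ∈ s ∧ ∀ i, f i x ≤ (z' i : EReal) := by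
      intro z' h
      obtain ⟨x, hx, h2⟩ := h
      exact ⟨x, hx, h2⟩
    choose! φ hφ1 hφ2 using hwit
    set F := Filter.map φ (𝓝[C] z) with hF
    have hFs : F ≤ 𝓟 s := by
      rw [hF, le_principal_iff, Filter.mem_map]
      filter_upwards [self_mem_nhdsWithin] with z' hz' using hφ1 z' hz'
    haveI : F.NeBot := hne.map φ
    obtain ⟨x, hxs, hclus⟩ := hscomp hFs
    refine ⟨x, hxs, fun i => ?_⟩
    by_contra hnotle
    rw [not_le] at hnotle
    obtain ⟨d, hd1, hd2⟩ := exists_between hnotle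
    lift d to ℝ using ⟨ne_top_of_lt hd2, ne_bot_of_gt hd1⟩ with dr
    have hU : ∀ᶠ y in 𝓝[s] x, (dr : EReal) < f i y := hlsc i x hxs _ hd2
    have hH : (𝓝 x ⊓ F).NeBot := hclus
    have hHle : 𝓝 x ⊓ F ≤ 𝓝[s] x := inf_le_inf_left _ hFs
    have hU' : ∀ᶠ y in 𝓝 x ⊓ F, (dr : EReal) < f i y := hU.filter_mono hHle
    have hzi : ∀ᶠ z' in 𝓝 z, z' i < dr :=
      (isOpen_lt (continuous_apply i) continuous_const).eventually_mem
        (EReal.coe_lt_coe_iff.mp hd1)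
    have hV : ∀ᶠ z' in 𝓝[C] z, f i (φ z') < (dr : EReal) := by
      filter_upwards [hzi.filter_mono nhdsWithin_le_nhds, self_mem_nhdsWithin] with z' h1 h2
      exact lt_of_le_of_lt (hφ2 z' h2 i) (by exact_mod_cast h1)
    have hV' : ∀ᶠ y in F, f i y < (dr : EReal) := hV
    have hV'' : ∀ᶠ y in 𝓝 x ⊓ F, f i y < (dr : EReal) := hV'.filter_mono inf_le_right
    obtain ⟨y, hy1, hy2⟩ := (hU'.and hV'').exists
    exact absurd hy2 (not_lt.mpr hy1.le)
  -- the constant vector cr is not in the closure of C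
  set p : Fin n → ℝ := fun _ => cr with hp
  have hpnot : p ∉ closure C := by
    intro hmem
    obtain ⟨x, hxs, hxle⟩ := hcl p hmem
    have h1 : (⨅ x ∈ s, ⨆ i, f i x) ≤ ⨆ i, f i x := iInf₂_le x hxs
    have h2 : (⨆ i, f i x) ≤ ((cr : ℝ) : EReal) := iSup_le hxle
    exact absurd ((hcI.trans_le h1).trans_le h2) (lt_irrefl _)
  -- C is convex
  have hCconv : Convex ℝ C := by
    rintro z₁ ⟨x₁, hx₁, h₁⟩ z₂ ⟨x₂, hx₂, h₂⟩ a b ha hb hab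
    refine ⟨a • x₁ + b • x₂, hsconv hx₁ hx₂ ha hb hab, fun i => ?_⟩
    refine (hconv i x₁ hx₁ x₂ hx₂ a b ha hb hab).trans ?_
    have e1 : (a : EReal) * f i x₁ ≤ (a : EReal) * (z₁ i : EReal) :=
      mul_le_mul_of_nonneg_left (h₁ i) (by exact_mod_cast ha)
    have e2 : (b : EReal) * f i x₂ ≤ (b : EReal) * (z₂ i : EReal) :=
      mul_le_mul_of_nonneg_left (h₂ i) (by exact_mod_cast hb)
    refine (add_le_add e1 e2).trans_eq ?_
    simp only [Pi.add_apply, Pi.smul_apply, smul_eq_mul]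
    norm_cast
  -- separating functional
  obtain ⟨g, u, hgp, hgC⟩ :=
    geometric_hahn_banach_point_closed hCconv.closure isClosed_closure hpnot
  have hgCle : ∀ z ∈ C, u < g z := fun z hz => hgC z (subset_closure hz)
  set e : Fin n → (Fin n → ℝ) := fun i => Pi.single i (1 : ℝ) with he
  have he_apply : ∀ i j, e i j = if j = i then 1 else 0 := by
    intro i j; rw [he]; simp [Pi.single_apply]
  set lam : Fin n → ℝ := fun i => g (e i) with hlam
  have hlam_eq : ∀ i, g (e i) = lam i := fun i => rfl
  have hrep : ∀ z : Fin n → ℝ, g z = ∑ i, z i * lam i := by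
    intro z
    have hz : z = ∑ i, z i • e i := by
      funext j
      simp [Finset.sum_apply, he_apply]
    conv_lhs => rw [hz]
    rw [map_sum]
    refine Finset.sum_congr rfl fun i _ => ?_
    rw [map_smul, smul_eq_mul, hlam_eq]
  -- rays upward: the coefficients are nonnegative
  have hmemray : ∀ (t : ℝ), 0 ≤ t → ∀ (i : Fin n), ∀ z ∈ C, z + t • e i ∈ C := by
    rintro t ht i z ⟨x, hx, hle⟩
    refine ⟨x, hx, fun j => ?_⟩
    have hk : z j ≤ (z + t • e i) j := by
      simp only [Pi.add_apply, Pi.smul_apply, smul_eq_mul, he_apply]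
      by_cases hji : j = i
      · simp [hji]; linarith
      · simp [hji]
    exact (hle j).trans (by exact_mod_cast hk)
  have hlamnn : ∀ i, 0 ≤ lam i := by
    intro i
    by_contra hneg
    push_neg at hneg
    have hu0 : u < g z₀ := hgCle z₀ hz₀
    have htpos : 0 < (u - g z₀) / lam i := div_pos_of_neg_of_neg (by linarith) hneg
    have hmem := hmemray _ htpos.le i z₀ hz₀
    have hk := hgCle _ hmem
    rw [map_add, map_smul, smul_eq_mul, hlam_eq, div_mul_cancel₀ _ (ne_of_lt hneg)] at hk
    linarith
  -- coefficients vanish where f can be ⊥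
  have hlamB : ∀ i, (∃ x ∈ s, f i x = ⊥) → lam i = 0 := by
    rintro i ⟨x₀, hx₀, hbot⟩
    have hnt : ∀ j, f j x₀ ≠ ⊤ := by
      intro j hj
      have h := hinfty x₀ hx₀ ⟨j, hj⟩ i
      rw [hbot] at h
      exact absurd h (by simp)
    have hz1mem : ∀ t : ℝ, (fun j => (f j x₀).toReal) + t • e i ∈ C := by
      intro t
      refine ⟨x₀, hx₀, fun j => ?_⟩
      by_cases hji : j = i
      · subst hji; rw [hbot]; exact bot_le
      · have hk : ((fun j => (f j x₀).toReal) + t • e i) j = (f j x₀).toReal := by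
          simp [he_apply, hji]
        rw [hk]
        exact EReal.le_coe_toReal (hnt j)
    by_contra hne0
    have hk := hgCle _ (hz1mem ((u - g (fun j => (f j x₀).toReal) - 1) / lam i))
    rw [map_add, map_smul, smul_eq_mul, hlam_eq, div_mul_cancel₀ _ hne0] at hk
    linarith
  -- some coefficient is positive
  have hexpos : ∃ i, 0 < lam i := by
    by_contra hno
    push_neg at hno
    have hall : ∀ i, lam i = 0 := fun i => le_antisymm (hno i) (hlamnn i)
    have h1 := hgCle z₀ hz₀
    rw [hrep z₀] at h1
    have h2 := hgp
    rw [hrep p] at h2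
    simp [hall] at h1 h2
    linarith
  set σ : ℝ := ∑ i, lam i with hσ
  have hσpos : 0 < σ := by
    obtain ⟨i, hi⟩ := hexpos
    exact Finset.sum_pos' (fun j _ => hlamnn j) ⟨i, Finset.mem_univ i, hi⟩
  set μ : Fin n → ℝ := fun i => lam i / σ with hμ
  have hμnn : ∀ i, 0 ≤ μ i := fun i => div_nonneg (hlamnn i) hσpos.le
  have hμsum : ∑ i, μ i = 1 := by
    rw [hμ]
    rw [← Finset.sum_div, ← hσ, div_self hσpos.ne']
  -- g p = cr * σ
  have hgpval : g p = cr * σ := by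
    rw [hrep p, hσ, Finset.mul_sum]
  have hcru : cr < u / σ := (lt_div_iff₀ hσpos).mpr (by rw [← hgpval]; exact hgp)
  -- the key lower bound
  have hkey : ∀ x ∈ s, ((u / σ : ℝ) : EReal) ≤ ∑ i, (μ i : EReal) * f i x := by
    intro x hx
    by_cases htopx : ∃ j, f j x = ⊤
    · have hall := hinfty x hx htopx
      obtain ⟨i₀, hi₀⟩ := hexpos
      have hμ0 : 0 < μ i₀ := div_pos hi₀ hσpos
      have hnn : ∀ i ∈ Finset.univ, (0 : EReal) ≤ (μ i : EReal) * f i x := by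
        intro i _
        rw [hall i]
        rcases eq_or_lt_of_le (hμnn i) with h | h
        · rw [← h]; simp
        · rw [EReal.mul_top_of_pos (by exact_mod_cast h)]; exact le_top
      have hstep := Finset.single_le_sum hnn (Finset.mem_univ i₀)
      rw [hall i₀, EReal.mul_top_of_pos (by exact_mod_cast hμ0)] at hstep
      exact le_top.trans hstep
    · push_neg at htopx
      have hzxC : (fun j => (f j x).toReal) ∈ C :=
        ⟨x, hx, fun i => EReal.le_coe_toReal (htopx i)⟩
      have hgzx := hgCle _ hzxC
      rw [hrep] at hgzx
      have heq : ∑ i, (μ i : EReal) * f i x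
          = ((∑ i, μ i * (f i x).toReal : ℝ) : EReal) := by
        rw [ereal_coe_sum]
        refine Finset.sum_congr rfl fun i _ => ?_
        by_cases hbi : f i x = ⊥
        · have h0 : μ i = 0 := by
            rw [hμ]
            simp [hlamB i ⟨x, hx, hbi⟩]
          rw [h0, hbi]
          simp
        · rw [← EReal.coe_toReal (htopx i) hbi, ← EReal.coe_mul, EReal.toReal_coe]
      rw [heq, EReal.coe_le_coe_iff]
      have hrw : ∑ i, μ i * (f i x).toReal = (∑ i, (f i x).toReal * lam i) / σ := by
        rw [Finset.sum_div]
        refine Finset.sum_congr rfl fun i _ => ?_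
        rw [hμ]
        ring
      rw [hrw]
      exact (div_le_div_iff_of_pos_right hσpos).mpr hgzx.le
  -- conclude
  have hwge : ((u / σ : ℝ) : EReal) ≤ w := by
    have h1 : ((u / σ : ℝ) : EReal) ≤
        ⨅ x ∈ s, ∑ i, (((⟨μ, hμnn, hμsum⟩ : {l : Fin n → ℝ // (∀ i, 0 ≤ l i) ∧ ∑ i, l i = 1})
          : Fin n → ℝ) i : EReal) * f i x :=
      le_iInf₂ fun x hx => hkey x hx
    rw [hw]
    exact h1.trans (le_iSup (fun lam : {l : Fin n → ℝ // (∀ i, 0 ≤ l i) ∧ ∑ i, l i = 1} =>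
      ⨅ x ∈ s, ∑ i, ((lam : Fin n → ℝ) i : EReal) * f i x) _)
  have : w < w := hwc.trans ((EReal.coe_lt_coe_iff.mpr hcru).trans_le hwge)
  exact lt_irrefl _ this
end
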